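/- If ψ : Γ → Γ' is an isomorphism of crystallographic groups and N is a normal subgroup of Γ, then the completion of ψ(N) in Γ' equals ψ(N̄), the image of the completion of N in Γ. -/

import Mathlib

/-!
The completion has a purely group-theoretic description, which any isomorphism transports: for
`N` normal in a crystallographic group `Γ`, `N̄` is the union of the normal subgroups of `Γ`
containing `N` with finite index. Indeed `N̄` is such a subgroup (normality is linear algebra,
finite index comes from discreteness), and any such `M` lies in `M̄ = N̄`, the two spans being
equal because a power of each translation of `M` lies in `N`.

The inclusion `M ⊆ M̄` for normal `M` is where Bieberbach's theorems enter: the translations of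
`Γ` span, so commutators of `x ∈ M` with them force the linear part of `x` to fix `Span(M)ᗮ`;
and the point group is finite, so a power of `x` is a translation, forcing `x.a ∈ Span(M)`.
Spanning is proved by the classical commutator argument: in a crystallographic group an
element whose linear part is within `1/2` of the identity is a translation.
-/

noncomputable section

/-- Euclidean `n`-space. -/
abbrev E (n : ℕ) := EuclideanSpace ℝ (Fin n)

/-- An isometry `a + A` of `E n`, acting by `x ↦ a + A x`, with `A` a linear isometry
(an element of `O(n)`). -/
@[ext] structure Iso (n : ℕ) where
  a : E n
  A : E n ≃ₗᵢ[ℝ] E n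

namespace Iso

variable {n : ℕ}

instance : Mul (Iso n) := ⟨fun x y => ⟨x.a + x.A y.a, y.A.trans x.A⟩⟩
instance : One (Iso n) := ⟨⟨0, LinearIsometryEquiv.refl ℝ (E n)⟩⟩
instance : Inv (Iso n) := ⟨fun x => ⟨-(x.A.symm x.a), x.A.symm⟩⟩

@[simp] lemma mul_a (x y : Iso n) : (x * y).a = x.a + x.A y.a := rfl
@[simp] lemma mul_A (x y : Iso n) : (x * y).A = y.A.trans x.A := rfl
@[simp] lemma one_a : (1 : Iso n).a = 0 := rfl
@[simp] lemma one_A : (1 : Iso n).A = LinearIsometryEquiv.refl ℝ (E n) := rfl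
@[simp] lemma inv_a (x : Iso n) : (x⁻¹).a = -(x.A.symm x.a) := rfl
@[simp] lemma inv_A (x : Iso n) : (x⁻¹).A = x.A.symm := rfl

/-- The group of isometries of `E n`, with composition as multiplication. -/
instance : Group (Iso n) where
  mul_assoc x y z := by
    refine Iso.ext ?_ ?_
    · simp [add_assoc]
    · ext v; simp
  one_mul x := by refine Iso.ext ?_ ?_ <;> simp
  mul_one x := by refine Iso.ext ?_ ?_ <;> simp
  inv_mul_cancel x := by
    refine Iso.ext ?_ ?_
    · simp
    · ext v; simp

/-- The action of the isometry `a + A` on a point `x` of `E n`: `x ↦ a + A x`. -/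
def act (g : Iso n) (x : E n) : E n := g.a + g.A x

/-- The translation `a + I`. -/
def trans (a : E n) : Iso n := ⟨a, LinearIsometryEquiv.refl ℝ (E n)⟩

/-- `g` is a translation if its linear part is the identity. -/
def IsTranslation (g : Iso n) : Prop := g.A = LinearIsometryEquiv.refl ℝ (E n)

/-- The subgroup of all translations of `E n`. -/
def translations (n : ℕ) : Subgroup (Iso n) where
  carrier := {g | g.IsTranslation}
  mul_mem' := by
    intro x y hx hy
    simp only [Set.mem_setOf_eq, IsTranslation] at *
    rw [mul_A, hx, hy]; simp
  one_mem' := rfl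
  inv_mem' := by
    intro x hx
    simp only [Set.mem_setOf_eq, IsTranslation] at *
    rw [inv_A, hx]; rfl

/-- The set of translation vectors of a set `S` of isometries:
`{a : E n | a + I ∈ S}`. -/
def transVecs (S : Set (Iso n)) : Set (E n) := {a | Iso.trans a ∈ S}

/-- `Span(S)`: the real linear span of the translation vectors of `S`. -/
def spanS (S : Set (Iso n)) : Submodule ℝ (E n) :=
  Submodule.span ℝ (transVecs S)

/-- A crystallographic (space) group: a group of isometries of `E n` that acts
properly discontinuously (equivalently, is discrete) and cocompactly. -/
def IsCrystallographic (Γ : Subgroup (Iso n)) : Prop :=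
  (∀ K : Set (E n), IsCompact K →
      {g : Iso n | g ∈ Γ ∧ ((Iso.act g '' K) ∩ K).Nonempty}.Finite) ∧
  ∃ K : Set (E n), IsCompact K ∧ ∀ x : E n, ∃ g ∈ Γ, g.act x ∈ K

/-- `N` is a normal subgroup of `Γ`. -/
def IsNormalIn (N Γ : Subgroup (Iso n)) : Prop :=
  N ≤ Γ ∧ ∀ g ∈ Γ, ∀ x ∈ N, g * x * g⁻¹ ∈ N

/-- The completion of `S` in `Γ`:
`S̄ = {b+B ∈ Γ : b ∈ Span(S) and Span(S)ᗮ ⊆ Fix(B)}`. -/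
def completion (Γ : Subgroup (Iso n)) (S : Set (Iso n)) : Set (Iso n) :=
  {g | g ∈ Γ ∧ g.a ∈ spanS S ∧ ∀ x ∈ (spanS S)ᗮ, g.A x = x}

end Iso

open RealInnerProductSpace

namespace LinearIsometryEquiv

variable {F : Type*} [NormedAddCommGroup F] [InnerProductSpace ℝ F]

lemma inner_apply_sub_self_eq_zero (A : F ≃ₗᵢ[ℝ] F) {y : F} (hy : A y = y) (x : F) :
    ⟪A x - x, y⟫ = 0 := by
  conv_lhs => rw [inner_sub_left, ← hy, A.inner_map_map, hy]
  exact sub_self _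

lemma apply_sub_self_mem_of_fixes_orthogonal (A : F ≃ₗᵢ[ℝ] F) {W : Submodule ℝ F}
    [W.HasOrthogonalProjection] (hA : ∀ y ∈ Wᗮ, A y = y) (x : F) : A x - x ∈ W := by
  rw [← W.orthogonal_orthogonal, Submodule.mem_orthogonal']
  exact fun y hy => A.inner_apply_sub_self_eq_zero (hA y hy) x

lemma apply_mem_orthogonal (A : F ≃ₗᵢ[ℝ] F) {W : Submodule ℝ F} (hA : ∀ v, A v ∈ W ↔ v ∈ W)
    {y : F} (hy : y ∈ Wᗮ) : A y ∈ Wᗮ := by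
  intro w hw
  have hw' : A.symm w ∈ W := (hA _).1 (by rwa [A.apply_symm_apply])
  rw [← A.apply_symm_apply w, A.inner_map_map]
  exact hy _ hw'

lemma norm_coe_le_one (A : F ≃ₗᵢ[ℝ] F) : ‖(A : F →L[ℝ] F)‖ ≤ 1 :=
  A.toLinearIsometry.norm_toContinuousLinearMap_le

lemma norm_coe_commutator_sub_one_le (A B : F ≃ₗᵢ[ℝ] F) :
    ‖((A * B * A⁻¹ * B⁻¹ : F ≃ₗᵢ[ℝ] F) : F →L[ℝ] F) - 1‖ ≤
      2 * ‖(A : F →L[ℝ] F) - 1‖ * ‖(B : F →L[ℝ] F) - 1‖ := by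
  set a : F →L[ℝ] F := (A : F →L[ℝ] F)
  set b : F →L[ℝ] F := (B : F →L[ℝ] F)
  set a' : F →L[ℝ] F := ((A⁻¹ : F ≃ₗᵢ[ℝ] F) : F →L[ℝ] F)
  set b' : F →L[ℝ] F := ((B⁻¹ : F ≃ₗᵢ[ℝ] F) : F →L[ℝ] F)
  have hcomm : ((A * B * A⁻¹ * B⁻¹ : F ≃ₗᵢ[ℝ] F) : F →L[ℝ] F) = a * b * a' * b' := rfl
  have hone : (1 : F →L[ℝ] F) = b * a * a' * b' := by
    change ((1 : F ≃ₗᵢ[ℝ] F) : F →L[ℝ] F) = ((B * A * A⁻¹ * B⁻¹ : F ≃ₗᵢ[ℝ] F) : F →L[ℝ] F)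
    simp
  have key : a * b * a' * b' - b * a * a' * b' =
      ((a - 1) * (b - 1) - (b - 1) * (a - 1)) * (a' * b') := by noncomm_ring
  rw [hcomm]
  conv_lhs => rw [hone, key]
  calc ‖((a - 1) * (b - 1) - (b - 1) * (a - 1)) * (a' * b')‖
      ≤ (‖a - 1‖ * ‖b - 1‖ + ‖b - 1‖ * ‖a - 1‖) * (1 * 1) := by
        refine (norm_mul_le _ _).trans (mul_le_mul ((norm_sub_le _ _).trans
          (add_le_add (norm_mul_le _ _) (norm_mul_le _ _))) ((norm_mul_le _ _).trans
          (mul_le_mul (norm_coe_le_one _) (norm_coe_le_one _) (norm_nonneg _) zero_le_one))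
          (norm_nonneg _) (by positivity))
    _ = 2 * ‖a - 1‖ * ‖b - 1‖ := by ring

lemma norm_coe_mul_inv_sub_one_le (A B : F ≃ₗᵢ[ℝ] F) :
    ‖((A * B⁻¹ : F ≃ₗᵢ[ℝ] F) : F →L[ℝ] F) - 1‖ ≤ ‖(A : F →L[ℝ] F) - (B : F →L[ℝ] F)‖ := by
  have hone : (1 : F →L[ℝ] F) = (B : F →L[ℝ] F) * ((B⁻¹ : F ≃ₗᵢ[ℝ] F) : F →L[ℝ] F) := by
    change ((1 : F ≃ₗᵢ[ℝ] F) : F →L[ℝ] F) = ((B * B⁻¹ : F ≃ₗᵢ[ℝ] F) : F →L[ℝ] F)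
    simp
  have hAB : ((A * B⁻¹ : F ≃ₗᵢ[ℝ] F) : F →L[ℝ] F) =
      (A : F →L[ℝ] F) * ((B⁻¹ : F ≃ₗᵢ[ℝ] F) : F →L[ℝ] F) := rfl
  rw [hAB, hone, ← sub_mul]
  exact (norm_mul_le _ _).trans (mul_le_of_le_one_right (norm_nonneg _) (norm_coe_le_one _))

/-- The range of `A - 1` is orthogonal to its kernel, so `A - 1` is injective, hence bounded
below, on its range. -/
lemma exists_pos_mul_norm_le_norm_sub_one_sq [FiniteDimensional ℝ F] (A : F ≃ₗᵢ[ℝ] F) :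
    ∃ c > 0, ∀ x, c * ‖((A : F →L[ℝ] F) - 1) x‖ ≤
      ‖((A : F →L[ℝ] F) - 1) (((A : F →L[ℝ] F) - 1) x)‖ := by
  set D : F →L[ℝ] F := (A : F →L[ℝ] F) - 1
  have hD : ∀ x, D x = A x - x := fun x => rfl
  let f : LinearMap.range (D : F →ₗ[ℝ] F) →ₗ[ℝ] F :=
    (D : F →ₗ[ℝ] F).comp (LinearMap.range (D : F →ₗ[ℝ] F)).subtype
  have hf : LinearMap.ker f = ⊥ := by
    rw [LinearMap.ker_eq_bot']
    rintro ⟨_, x, rfl⟩ hx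
    have hfix : A (D x) = D x := sub_eq_zero.1 (by simpa [f, hD] using hx)
    have h0 := A.inner_apply_sub_self_eq_zero hfix x
    rw [← hD, inner_self_eq_zero] at h0
    exact Subtype.ext h0
  obtain ⟨K, hK, hanti⟩ := f.exists_antilipschitzWith hf
  refine ⟨(K : ℝ)⁻¹, by positivity, fun x => ?_⟩
  have h := hanti.le_mul_norm (LinearMap.map_zero f) ⟨D x, x, rfl⟩
  rw [inv_mul_le_iff₀ (by positivity)]
  exact h

lemma exists_lt_norm_coe_sub_lt [FiniteDimensional ℝ F] (A : ℕ → F ≃ₗᵢ[ℝ] F) {ε : ℝ}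
    (hε : 0 < ε) :
    ∃ j i, j < i ∧ ‖(A i : F →L[ℝ] F) - A j‖ < ε := by
  obtain ⟨ℓ, -, φ, hφ, hlim⟩ := tendsto_subseq_of_bounded
    (Metric.isBounded_closedBall (x := (0 : F →L[ℝ] F)) (r := 1))
    (x := fun j => (A j : F →L[ℝ] F)) (fun j => by simpa using (A j).norm_coe_le_one)
  obtain ⟨N, hN⟩ := Metric.cauchySeq_iff'.1 hlim.cauchySeq ε hε
  exact ⟨φ N, φ (N + 1), hφ N.lt_succ_self, by simpa [dist_eq_norm] using hN (N + 1) N.le_succ⟩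

end LinearIsometryEquiv

lemma AddSubgroup.exists_norm_sub_le_of_mem_span {F : Type*} [NormedAddCommGroup F]
    [NormedSpace ℝ F] [FiniteDimensional ℝ F] (L : AddSubgroup F) :
    ∃ R, ∀ x ∈ Submodule.span ℝ (L : Set F), ∃ t ∈ L, ‖x - t‖ ≤ R := by
  obtain ⟨b, hbL, hspan, hli⟩ := exists_linearIndependent ℝ (L : Set F)
  have hb : b.Finite := hli.setFinite
  refine ⟨∑ w ∈ hb.toFinset, ‖w‖, fun x hx => ?_⟩
  rw [← hspan, ← hb.coe_toFinset, Submodule.mem_span_finset] at hx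
  obtain ⟨f, -, rfl⟩ := hx
  refine ⟨∑ w ∈ hb.toFinset, ⌊f w⌋ • w,
    sum_mem fun w hw => zsmul_mem (hbL (hb.mem_toFinset.1 hw)) _, ?_⟩
  rw [← Finset.sum_sub_distrib]
  refine (norm_sum_le _ _).trans (Finset.sum_le_sum fun w _ => ?_)
  rw [← Int.cast_smul_eq_zsmul ℝ, ← sub_smul, Int.self_sub_floor, norm_smul,
    Real.norm_of_nonneg (Int.fract_nonneg _)]
  exact mul_le_of_le_one_left (norm_nonneg _) (Int.fract_lt_one _).le

lemma exists_of_geometric_decrease {X : Type*} (f : X → X) (p : X → Prop) (d : X → ℝ) {P c q : ℝ}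
    (hP : 0 < P) (hc : 0 ≤ c) (hq₀ : 0 ≤ q) (hq : q < 1)
    (hstep : ∀ x, p x → P < d x → p (f x) ∧ c * d x ≤ d (f x) ∧ d (f x) ≤ q * d x)
    {x₀ : X} (hx₀ : p x₀) (hd₀ : P < d x₀) : ∃ x, p x ∧ c * P ≤ d x ∧ d x ≤ P := by
  suffices h : ∀ k : ℕ, ∀ x, p x → P < d x → q ^ k * d x < P → ∃ y, p y ∧ c * P ≤ d y ∧ d y ≤ P by
    obtain ⟨k, hk⟩ := exists_pow_lt_of_lt_one (div_pos hP (hP.trans hd₀)) hq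
    exact h k x₀ hx₀ hd₀ (by rwa [lt_div_iff₀ (hP.trans hd₀)] at hk)
  intro k
  induction k with
  | zero => intro x _ hx hk; linarith
  | succ k ih =>
    intro x hpx hx hk
    obtain ⟨hpf, hlow, hup⟩ := hstep x hpx hx
    by_cases hfx : d (f x) ≤ P
    · exact ⟨f x, hpf, (mul_le_mul_of_nonneg_left hx.le hc).trans hlow, hfx⟩
    · refine ih (f x) hpf (not_le.1 hfx) ?_
      calc q ^ k * d (f x) ≤ q ^ k * (q * d x) := mul_le_mul_of_nonneg_left hup (by positivity)
        _ = q ^ (k + 1) * d x := by ring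
        _ < P := hk

namespace Subgroup

variable {G G' : Type*} [Group G] [Group G']

/-- For `H` normal in a crystallographic group this is the completion of `H`
(`IsCrystallographic.preimage_completion`), the largest normal subgroup commensurable with `H`. -/
def commensurableNormalHull (H : Subgroup G) : Set G :=
  {x | ∃ M : Subgroup G, M.Normal ∧ H ≤ M ∧ H.relIndex M ≠ 0 ∧ x ∈ M}

lemma image_commensurableNormalHull (e : G ≃* G') (H : Subgroup G) :
    e '' H.commensurableNormalHull = (H.map e.toMonoidHom).commensurableNormalHull := by
  ext y
  constructor
  · rintro ⟨x, ⟨M, hM, hHM, hidx, hx⟩, rfl⟩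
    exact ⟨M.map e.toMonoidHom, hM.map _ e.surjective, map_mono hHM,
      by rwa [relIndex_map_map_of_injective _ _ e.injective], mem_map_of_mem _ hx⟩
  · rintro ⟨M, hM, hHM, hidx, hy⟩
    refine ⟨e.symm y, ⟨M.comap e.toMonoidHom, hM.comap _, map_le_iff_le_comap.1 hHM, ?_, ?_⟩,
      e.apply_symm_apply y⟩
    · rwa [← relIndex_map_map_of_injective (f := e.toMonoidHom) _ _ e.injective,
        map_comap_eq_self_of_surjective e.surjective]
    · simpa using hy

end Subgroup

namespace Iso

variable {n : ℕ}

@[simp] lemma trans_a (v : E n) : (trans v).a = v := rfl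
@[simp] lemma trans_A (v : E n) : (trans v).A = 1 := rfl

lemma trans_add (v w : E n) : trans (v + w) = trans v * trans w := by
  ext <;> simp

@[simp] lemma trans_zero : trans (0 : E n) = 1 := rfl

lemma trans_neg (v : E n) : trans (-v) = (trans v)⁻¹ :=
  eq_inv_of_mul_eq_one_left (by rw [← trans_add, neg_add_cancel, trans_zero])

lemma trans_nsmul (k : ℕ) (v : E n) : trans (k • v) = trans v ^ k := by
  induction k with
  | zero => simp
  | succ k ih => rw [succ_nsmul, trans_add, ih, pow_succ]

lemma trans_a_eq_self {g : Iso n} (hg : g.A = 1) : trans g.a = g :=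
  Iso.ext rfl hg.symm

lemma mul_trans_mul_inv (g : Iso n) (v : E n) : g * trans v * g⁻¹ = trans (g.A v) := by
  ext <;> simp

lemma commutator_trans (g : Iso n) (v : E n) :
    g * trans v * g⁻¹ * (trans v)⁻¹ = trans (g.A v - v) := by
  rw [mul_trans_mul_inv, ← trans_neg, ← trans_add, sub_eq_add_neg]

def linearPart : Iso n →* (E n ≃ₗᵢ[ℝ] E n) where
  toFun g := g.A
  map_one' := rfl
  map_mul' _ _ := rfl

@[simp] lemma linearPart_apply (g : Iso n) : linearPart g = g.A := rfl

lemma inner_pow_a {g : Iso n} {y : E n} (hy : g.A y = y) (k : ℕ) :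
    ⟪(g ^ k).a, y⟫ = k * ⟪g.a, y⟫ := by
  induction k with
  | zero => simp
  | succ k ih =>
    conv_lhs =>
      rw [pow_succ', mul_a, inner_add_left, ← hy, LinearIsometryEquiv.inner_map_map, hy, ih]
    push_cast
    ring

def defect (g : Iso n) : E n →L[ℝ] E n := (g.A : E n →L[ℝ] E n) - 1

@[simp] lemma defect_apply (g : Iso n) (x : E n) : g.defect x = g.A x - x := rfl

lemma defect_eq_zero_iff {g : Iso n} : g.defect = 0 ↔ g.A = 1 := by
  constructor
  · intro h
    ext x : 1
    simpa [sub_eq_zero] using congrArg (· x) h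
  · intro h
    ext x : 1
    simp [h]

lemma norm_defect_commutator_le (α μ : Iso n) :
    ‖(α * μ * α⁻¹ * μ⁻¹).defect‖ ≤ 2 * ‖α.defect‖ * ‖μ.defect‖ :=
  LinearIsometryEquiv.norm_coe_commutator_sub_one_le α.A μ.A

lemma norm_commutator_a_sub_le (α μ : Iso n) :
    ‖(α * μ * α⁻¹ * μ⁻¹).a - α.defect μ.a‖ ≤
      ‖μ.defect‖ * ‖α.a‖ + ‖(α * μ * α⁻¹ * μ⁻¹).defect‖ * ‖μ.a‖ := by
  set ν := α * μ * α⁻¹ * μ⁻¹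
  have key : ν.a - α.defect μ.a = -α.A (μ.defect (α.A.symm α.a)) - ν.defect μ.a := by
    simp only [ν, defect_apply, mul_a, mul_A, inv_a, inv_A, LinearIsometryEquiv.trans_apply,
      map_neg, map_sub, LinearIsometryEquiv.apply_symm_apply]
    abel
  rw [key]
  refine (norm_sub_le _ _).trans (add_le_add ?_ (ν.defect.le_opNorm _))
  rw [norm_neg, LinearIsometryEquiv.norm_map]
  exact (μ.defect.le_opNorm _).trans_eq (by rw [LinearIsometryEquiv.norm_map])

/-- The translation part of `ν = α μ α⁻¹ μ⁻¹` is `α.defect μ.a` up to an error of at most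
`5 c / 16 * ‖α.defect μ.a‖`; all four bounds follow from this. -/
lemma commutator_step {α μ : Iso n} {c η P : ℝ} (hc : 0 < c) (hc1 : c ≤ 1)
    (hα : ‖α.defect‖ ≤ 1 / 2) (hαc : ∀ x, c * ‖α.defect x‖ ≤ ‖α.defect (α.defect x)‖)
    (hη : η ≤ c ^ 2 / 16) (hμ : ‖μ.defect‖ ≤ η) (hμa : c * ‖μ.a‖ ≤ 4 * ‖α.defect μ.a‖)
    (hP : ‖α.a‖ ≤ P) (hd : P < ‖α.defect μ.a‖) :
    ‖(α * μ * α⁻¹ * μ⁻¹).defect‖ ≤ η ∧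
    c * ‖(α * μ * α⁻¹ * μ⁻¹).a‖ ≤ 4 * ‖α.defect (α * μ * α⁻¹ * μ⁻¹).a‖ ∧
    c / 2 * ‖α.defect μ.a‖ ≤ ‖α.defect (α * μ * α⁻¹ * μ⁻¹).a‖ ∧
    ‖α.defect (α * μ * α⁻¹ * μ⁻¹).a‖ ≤ 3 / 4 * ‖α.defect μ.a‖ := by
  set ν := α * μ * α⁻¹ * μ⁻¹
  set d := ‖α.defect μ.a‖
  set e := ν.a - α.defect μ.a
  have hν : ‖ν.defect‖ ≤ η := by
    have := norm_defect_commutator_le α μ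
    nlinarith [norm_nonneg μ.defect, norm_nonneg α.defect]
  have he : ‖e‖ ≤ 5 * c / 16 * d := by
    have h1 : ‖μ.defect‖ * ‖α.a‖ ≤ c / 16 * d := by
      have : ‖μ.defect‖ ≤ c / 16 := by nlinarith
      exact mul_le_mul this (hP.trans hd.le) (norm_nonneg _) (by positivity)
    have h2 : c * (‖ν.defect‖ * ‖μ.a‖) ≤ c * (c / 4 * d) :=
      calc c * (‖ν.defect‖ * ‖μ.a‖) = ‖ν.defect‖ * (c * ‖μ.a‖) := by ring
        _ ≤ c ^ 2 / 16 * (4 * d) :=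
          mul_le_mul (hν.trans hη) hμa (by positivity) (by positivity)
        _ = c * (c / 4 * d) := by ring
    have h2' := le_of_mul_le_mul_left h2 hc
    linarith [norm_commutator_a_sub_le α μ]
  have hνa : ν.a = α.defect μ.a + e := (add_sub_cancel _ _).symm
  have hDe : ‖α.defect e‖ ≤ 1 / 2 * ‖e‖ :=
    (α.defect.le_opNorm e).trans (mul_le_mul_of_nonneg_right hα (norm_nonneg _))
  have hlow : c * d - 1 / 2 * ‖e‖ ≤ ‖α.defect ν.a‖ := by
    have h : ‖α.defect (α.defect μ.a)‖ ≤ ‖α.defect ν.a‖ + ‖α.defect e‖ := by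
      simpa [hνa, map_add] using norm_sub_le (α.defect ν.a) (α.defect e)
    linarith [hαc μ.a]
  have hup : ‖α.defect ν.a‖ ≤ 1 / 2 * (d + ‖e‖) := by
    refine (α.defect.le_opNorm _).trans (mul_le_mul hα ?_ (norm_nonneg _) (by norm_num))
    rw [hνa]
    exact norm_add_le _ _
  have hνa' : ‖ν.a‖ ≤ d + ‖e‖ := by rw [hνa]; exact norm_add_le _ _
  have hd0 : 0 ≤ d := norm_nonneg _
  refine ⟨hν, ?_, by nlinarith, by nlinarith⟩
  nlinarith

def translationLattice (H : Subgroup (Iso n)) : AddSubgroup (E n) where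
  carrier := transVecs (H : Set (Iso n))
  add_mem' {v w} hv hw := by
    change trans (v + w) ∈ H
    rw [trans_add]
    exact mul_mem hv hw
  zero_mem' := by
    change trans 0 ∈ H
    rw [trans_zero]
    exact one_mem H
  neg_mem' {v} hv := by
    change trans (-v) ∈ H
    rw [trans_neg]
    exact inv_mem hv

def actingAlong (W : Submodule ℝ (E n)) : Subgroup (Iso n) where
  carrier := {g | g.a ∈ W ∧ ∀ y ∈ Wᗮ, g.A y = y}
  mul_mem' {g h} hg hh := by
    refine ⟨?_, fun y hy => by simp [hh.2 y hy, hg.2 y hy]⟩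
    have := g.A.apply_sub_self_mem_of_fixes_orthogonal hg.2 h.a
    simpa using W.add_mem hg.1 (W.add_mem this hh.1)
  one_mem' := ⟨W.zero_mem, fun _ _ => rfl⟩
  inv_mem' {g} hg := by
    have hinv : ∀ y ∈ Wᗮ, g.A.symm y = y := fun y hy => by
      rw [LinearIsometryEquiv.symm_apply_eq, hg.2 y hy]
    refine ⟨?_, hinv⟩
    have := g.A.symm.apply_sub_self_mem_of_fixes_orthogonal hinv g.a
    simpa using W.neg_mem (W.add_mem this hg.1)

lemma completion_eq (Γ : Subgroup (Iso n)) (S : Set (Iso n)) :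
    completion Γ S = (Γ : Set (Iso n)) ∩ actingAlong (spanS S) := rfl

lemma conj_mem_actingAlong {W : Submodule ℝ (E n)} {h x : Iso n}
    (hh : ∀ v, h.A v ∈ W ↔ v ∈ W) (hx : x ∈ actingAlong W) : h * x * h⁻¹ ∈ actingAlong W := by
  have hperp : ∀ y ∈ Wᗮ, h.A.symm y ∈ Wᗮ := fun y hy =>
    h.A.symm.apply_mem_orthogonal (fun v => by rw [← hh, LinearIsometryEquiv.apply_symm_apply]) hy
  have hfix : ∀ y ∈ Wᗮ, (h * x * h⁻¹).A y = y := fun y hy => by simp [hx.2 _ (hperp y hy)]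
  have hsub := (h * x * h⁻¹).A.apply_sub_self_mem_of_fixes_orthogonal hfix h.a
  have ha : (h * x * h⁻¹).a = h.A x.a - ((h * x * h⁻¹).A h.a - h.a) := by simp; abel
  exact ⟨ha ▸ W.sub_mem ((hh _).2 hx.1) hsub, hfix⟩

variable {Γ : Subgroup (Iso n)}

lemma IsCrystallographic.finite_norm_a_le (hΓ : IsCrystallographic Γ) (R : ℝ) :
    {g : Iso n | g ∈ Γ ∧ ‖g.a‖ ≤ R}.Finite := by
  refine (hΓ.1 (Metric.closedBall 0 |R|) (isCompact_closedBall _ _)).subset ?_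
  rintro g ⟨hg, hgR⟩
  exact ⟨hg, g.a, ⟨0, by simp, by simp [act]⟩, by simpa using hgR.trans (le_abs_self R)⟩

lemma IsCrystallographic.exists_norm_a_sub_le (hΓ : IsCrystallographic Γ) :
    ∃ R, ∀ x : E n, ∃ g ∈ Γ, ‖g.a - x‖ ≤ R := by
  obtain ⟨K, hK, hcov⟩ := hΓ.2
  obtain ⟨r, hr⟩ := hK.isBounded.subset_closedBall 0
  refine ⟨r, fun x => ?_⟩
  obtain ⟨h, hh, hx⟩ := hcov x
  refine ⟨h⁻¹, inv_mem hh, ?_⟩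
  have : h⁻¹.a - x = -h.A.symm (h.act x) := by simp [act]; abel
  rw [this, norm_neg, LinearIsometryEquiv.norm_map]
  simpa using hr hx

/-- Two of the elements `β j ∈ Γ` lying near `T₀ 2ʲ • u` have almost equal linear parts, and
`β i (β j)⁻¹` is then the required almost translation. -/
lemma IsCrystallographic.exists_almost_translation (hΓ : IsCrystallographic Γ) {u : E n}
    (hu : ‖u‖ ≤ 1) {η : ℝ} (hη : 0 < η) (T : ℝ) :
    ∃ g ∈ Γ, ∃ s ≥ T, ‖g.defect‖ ≤ η ∧ ‖g.a - s • u‖ ≤ η * s := by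
  obtain ⟨R, hR⟩ := hΓ.exists_norm_a_sub_le
  set T₀ := max (max T (4 * R / η)) 0
  have hT₀ : 0 ≤ T₀ := le_max_right _ _
  have hRT₀ : 4 * R ≤ η * T₀ := by
    rw [← div_le_iff₀' hη]; exact (le_max_right _ _).trans (le_max_left _ _)
  set t : ℕ → ℝ := fun j => T₀ * 2 ^ j
  choose β hβΓ hβ using fun j => hR (t j • u)
  obtain ⟨j, i, hji, hβA⟩ :=
    LinearIsometryEquiv.exists_lt_norm_coe_sub_lt (fun j => (β j).A) (half_pos hη)
  have ht : T₀ ≤ t j ∧ 2 * t j ≤ t i := by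
    have h1 : (1 : ℝ) ≤ 2 ^ j := one_le_pow₀ (by norm_num)
    have h2 : (2 : ℝ) ^ (j + 1) ≤ 2 ^ i := pow_le_pow_right₀ (by norm_num) hji
    rw [pow_succ] at h2
    constructor <;> nlinarith
  set g := β i * (β j)⁻¹
  have hg : ‖g.defect‖ ≤ η / 2 :=
    (LinearIsometryEquiv.norm_coe_mul_inv_sub_one_le _ _).trans hβA.le
  have hga : g.a - (t i - t j) • u =
      ((β i).a - t i • u) - g.A ((β j).a - t j • u) - g.defect (t j • u) := by
    simp [g, sub_smul, smul_sub]
    abel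
  have htu : ‖g.defect (t j • u)‖ ≤ η / 2 * t j := by
    refine (g.defect.le_opNorm _).trans (mul_le_mul hg ?_ (norm_nonneg _) (by positivity))
    rw [norm_smul, Real.norm_of_nonneg (hT₀.trans ht.1)]
    exact mul_le_of_le_one_right (hT₀.trans ht.1) hu
  refine ⟨g, mul_mem (hβΓ i) (inv_mem (hβΓ j)), t i - t j, ?_, by linarith, ?_⟩
  · linarith [le_max_left T (4 * R / η), le_max_left (max T (4 * R / η)) 0]
  · have h1 := norm_sub_le ((β i).a - t i • u - g.A ((β j).a - t j • u)) (g.defect (t j • u))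
    have h2 := norm_sub_le ((β i).a - t i • u) (g.A ((β j).a - t j • u))
    rw [LinearIsometryEquiv.norm_map] at h2
    have h3 := mul_le_mul_of_nonneg_left ht.1 hη.le
    have h4 := mul_le_mul_of_nonneg_left ht.2 hη.le
    rw [hga]
    linarith [hβ i, hβ j]

/-- Starting from a far almost translation in the direction `u`, iterated commutators with `α`
contract the displacement `α.defect μ.a` geometrically, but no faster than by `c / 2`, while
keeping the linear part within `η` of the identity; stop once it drops below `‖α.a‖ + 1`. -/
lemma IsCrystallographic.exists_bounded_almost_translation_moved (hΓ : IsCrystallographic Γ)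
    {α : Iso n} (hα : α ∈ Γ) (hα2 : ‖α.defect‖ ≤ 1 / 2) {c : ℝ} (hc : 0 < c) (hc1 : c ≤ 1)
    (hαc : ∀ x, c * ‖α.defect x‖ ≤ ‖α.defect (α.defect x)‖) {u : E n} (hu : ‖u‖ = 1)
    (hαu : c ≤ ‖α.defect u‖) {η : ℝ} (hη₀ : 0 < η) (hη : η ≤ c ^ 2 / 16) :
    ∃ ξ ∈ Γ, ‖ξ.defect‖ ≤ η ∧ c * ‖ξ.a‖ ≤ 4 * (‖α.a‖ + 1) ∧
      c / 2 * (‖α.a‖ + 1) ≤ ‖α.defect ξ.a‖ := by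
  set P := ‖α.a‖ + 1
  have hP : 0 < P := by positivity
  obtain ⟨γ, hγ, s, hs, hγd, hγa⟩ := hΓ.exists_almost_translation hu.le hη₀ (2 * P / c + 1)
  have hs₀ : 2 * P < c * s := by
    have := mul_lt_mul_of_pos_left (lt_of_lt_of_le (lt_add_one (2 * P / c)) hs) hc
    rwa [mul_div_cancel₀ _ hc.ne'] at this
  have hs_pos : 0 < s := pos_of_mul_pos_right (by linarith) hc.le
  have hηc : η ≤ c := hη.trans (by nlinarith)
  have hγD : c * s / 2 ≤ ‖α.defect γ.a‖ := by
    have h1 : ‖α.defect (γ.a - s • u)‖ ≤ 1 / 2 * (η * s) :=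
      (α.defect.le_opNorm _).trans (mul_le_mul hα2 hγa (norm_nonneg _) (by norm_num))
    have h2 : ‖α.defect (s • u)‖ ≤ ‖α.defect γ.a‖ + ‖α.defect (γ.a - s • u)‖ := by
      simpa [map_sub] using norm_sub_le (α.defect γ.a) (α.defect (γ.a - s • u))
    rw [map_smul, norm_smul, Real.norm_of_nonneg hs_pos.le] at h2
    nlinarith [mul_le_mul_of_nonneg_left hαu hs_pos.le]
  have hγa' : ‖γ.a‖ ≤ 2 * s := by
    have := norm_le_norm_add_norm_sub' γ.a (s • u)
    rw [norm_smul, hu, Real.norm_of_nonneg hs_pos.le] at this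
    nlinarith
  obtain ⟨ξ, ⟨hξ, hξd, hξa⟩, hξP, hξP'⟩ := exists_of_geometric_decrease
    (fun μ => α * μ * α⁻¹ * μ⁻¹)
    (fun μ => μ ∈ Γ ∧ ‖μ.defect‖ ≤ η ∧ c * ‖μ.a‖ ≤ 4 * ‖α.defect μ.a‖)
    (fun μ => ‖α.defect μ.a‖) hP (by positivity : 0 ≤ c / 2) (by norm_num : (0 : ℝ) ≤ 3 / 4)
    (by norm_num)
    (fun μ ⟨hμ, hμd, hμa⟩ hμP => by
      obtain ⟨h1, h2, h3, h4⟩ := commutator_step hc hc1 hα2 hαc hη hμd hμa (by simp [P]) hμP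
      exact ⟨⟨mul_mem (mul_mem (mul_mem hα hμ) (inv_mem hα)) (inv_mem hμ), h1, h2⟩, h3, h4⟩)
    (x₀ := γ) ⟨hγ, hγd, by nlinarith⟩ (by nlinarith)
  exact ⟨ξ, hξ, hξd, by linarith, hξP⟩

lemma IsCrystallographic.exists_pos_forall_norm_defect_lt (hΓ : IsCrystallographic Γ) (R : ℝ) :
    ∃ η > 0, ∀ g ∈ Γ, ‖g.a‖ ≤ R → ‖g.defect‖ < η → g.A = 1 := by
  set S := {g : Iso n | g ∈ Γ ∧ ‖g.a‖ ≤ R ∧ g.A ≠ 1}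
  rcases S.eq_empty_or_nonempty with hS | hS
  · refine ⟨1, one_pos, fun g hg hgR _ => ?_⟩
    by_contra hA
    exact (Set.eq_empty_iff_forall_notMem.1 hS) g ⟨hg, hgR, hA⟩
  obtain ⟨g₀, ⟨-, -, hg₀⟩, hmin⟩ := Set.exists_min_image S (fun g => ‖g.defect‖)
    ((hΓ.finite_norm_a_le R).subset fun g hg => ⟨hg.1, hg.2.1⟩) hS
  refine ⟨‖g₀.defect‖, norm_pos_iff.2 (mt defect_eq_zero_iff.1 hg₀), fun g hg hgR hgd => ?_⟩
  by_contra hA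
  exact (hmin g ⟨hg, hgR, hA⟩).not_gt hgd

/-- Commutators with `α` map a translation by `v` to the translation by `α.defect v`, which is
strictly shorter unless it vanishes; a shortest such `v` contradicts discreteness. -/
lemma IsCrystallographic.defect_eq_zero_of_trans_mem (hΓ : IsCrystallographic Γ) {α : Iso n}
    (hα : α ∈ Γ) (hα1 : ‖α.defect‖ < 1) {v : E n} (hv : trans v ∈ Γ) : α.defect v = 0 := by
  by_contra hv0
  set S := {w : E n | trans w ∈ Γ ∧ α.defect w ≠ 0 ∧ ‖w‖ ≤ ‖v‖}
  have hS : S.Finite := ((hΓ.finite_norm_a_le ‖v‖).image Iso.a).subset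
    fun w ⟨hw, _, hwv⟩ => ⟨trans w, ⟨hw, hwv⟩, rfl⟩
  obtain ⟨w, ⟨hw, hw0, hwv⟩, hmin⟩ := Set.exists_min_image S norm hS ⟨v, hv, hv0, le_rfl⟩
  have hshort : ‖α.defect w‖ < ‖w‖ := by
    have hwpos : 0 < ‖w‖ := norm_pos_iff.2 fun h => hw0 (by simp [h])
    exact (α.defect.le_opNorm w).trans_lt (mul_lt_of_lt_one_left hwpos hα1)
  have hDw : α.defect w ∈ S := by
    refine ⟨?_, fun h => hw0 ?_, hshort.le.trans hwv⟩
    · rw [defect_apply, ← commutator_trans]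
      exact mul_mem (mul_mem (mul_mem hα hw) (inv_mem hα)) (inv_mem hw)
    · have h0 := α.A.inner_apply_sub_self_eq_zero (sub_eq_zero.1 h) w
      rwa [← defect_apply, inner_self_eq_zero] at h0
  exact (hmin _ hDw).not_gt hshort

/-- Bieberbach's lemma. -/
theorem IsCrystallographic.A_eq_one_of_norm_defect_lt (hΓ : IsCrystallographic Γ) {α : Iso n}
    (hα : α ∈ Γ) (hα2 : ‖α.defect‖ < 1 / 2) : α.A = 1 := by
  by_contra hA
  obtain ⟨z, hz⟩ : ∃ z, α.defect z ≠ 0 := by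
    by_contra! h
    exact hA (defect_eq_zero_iff.1 (ContinuousLinearMap.ext h))
  obtain ⟨c₀, hc₀, hαc₀⟩ := α.A.exists_pos_mul_norm_le_norm_sub_one_sq
  set c := min c₀ 1
  have hc : 0 < c := lt_min hc₀ one_pos
  have hαc : ∀ x, c * ‖α.defect x‖ ≤ ‖α.defect (α.defect x)‖ := fun x =>
    (mul_le_mul_of_nonneg_right (min_le_left _ _) (norm_nonneg _)).trans (hαc₀ x)
  set u := ‖α.defect z‖⁻¹ • α.defect z
  have hu : ‖u‖ = 1 := norm_smul_inv_norm hz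
  have hαu : c ≤ ‖α.defect u‖ := by
    rw [map_smul, norm_smul, norm_inv, norm_norm, le_inv_mul_iff₀ (norm_pos_iff.2 hz), mul_comm]
    exact hαc z
  set P := ‖α.a‖ + 1
  obtain ⟨η₀, hη₀, hgap⟩ := hΓ.exists_pos_forall_norm_defect_lt (4 * P / c)
  obtain ⟨ξ, hξ, hξd, hξa, hξD⟩ := hΓ.exists_bounded_almost_translation_moved hα hα2.le hc
    (min_le_right _ _) hαc hu hαu (η := min (η₀ / 2) (c ^ 2 / 16)) (by positivity)
    (min_le_right _ _)
  have hξA : ξ.A = 1 := hgap ξ hξ (by rwa [le_div_iff₀' hc])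
    (hξd.trans_lt ((min_le_left _ _).trans_lt (half_lt_self hη₀)))
  have hξt : trans ξ.a ∈ Γ := by rwa [trans_a_eq_self hξA]
  have := hΓ.defect_eq_zero_of_trans_mem hα (by linarith) hξt
  rw [this, norm_zero] at hξD
  have : 0 < c / 2 * P := by positivity
  linarith

/-- Bieberbach's first theorem. -/
theorem IsCrystallographic.spanS_eq_top (hΓ : IsCrystallographic Γ) :
    spanS (Γ : Set (Iso n)) = ⊤ := by
  by_contra hW
  obtain ⟨u₀, hu₀, hu₀0⟩ := Submodule.exists_mem_ne_zero_of_ne_bot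
    (mt Submodule.orthogonal_eq_bot_iff.1 hW)
  set u := ‖u₀‖⁻¹ • u₀
  have hu : ‖u‖ = 1 := norm_smul_inv_norm hu₀0
  obtain ⟨g, hg, s, hs, hgd, hga⟩ := hΓ.exists_almost_translation hu.le (η := 1 / 4)
    (by norm_num) 1
  have hgA : g.A = 1 := hΓ.A_eq_one_of_norm_defect_lt hg (by linarith)
  have hgW : g.a ∈ spanS (Γ : Set (Iso n)) :=
    Submodule.subset_span (show trans g.a ∈ Γ by rwa [trans_a_eq_self hgA])
  have hgu : ⟪g.a, u⟫ = 0 :=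
    (Submodule.mem_orthogonal _ _).1 (Submodule.smul_mem _ _ hu₀) _ hgW
  have hsu : s = ⟪s • u - g.a, u⟫ := by
    rw [inner_sub_left, hgu, real_inner_smul_left, real_inner_self_eq_norm_sq, hu]; ring
  have := real_inner_le_norm (s • u - g.a) u
  rw [← hsu, hu, mul_one, norm_sub_rev] at this
  linarith

theorem IsCrystallographic.finite_linearPart (hΓ : IsCrystallographic Γ) :
    (linearPart '' (Γ : Set (Iso n))).Finite := by
  obtain ⟨R, hR⟩ := (translationLattice Γ).exists_norm_sub_le_of_mem_span
  refine ((hΓ.finite_norm_a_le R).image linearPart).subset ?_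
  rintro _ ⟨g, hg, rfl⟩
  obtain ⟨t, ht, htR⟩ := hR (-g.a) (by
    change -g.a ∈ spanS (Γ : Set (Iso n))
    rw [hΓ.spanS_eq_top]
    trivial)
  refine ⟨trans t * g, ⟨mul_mem ht hg, ?_⟩, by simp⟩
  rw [← norm_neg]
  simpa [add_comm, sub_eq_add_neg] using htR

lemma IsCrystallographic.exists_pow_A_eq_one (hΓ : IsCrystallographic Γ) {g : Iso n}
    (hg : g ∈ Γ) : ∃ k, 0 < k ∧ (g ^ k).A = 1 := by
  have : Finite (Γ.map linearPart) := by
    rw [← SetLike.coe_sort_coe, Subgroup.coe_map]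
    exact hΓ.finite_linearPart.to_subtype
  obtain ⟨k, hk, hgk⟩ :=
    (isOfFinOrder_of_finite (⟨g.A, g, hg, rfl⟩ : Γ.map linearPart)).exists_pow_eq_one
  refine ⟨k, hk, ?_⟩
  rw [← linearPart_apply, map_pow]
  simpa [Subtype.ext_iff] using hgk

variable {N : Subgroup (Iso n)}

lemma IsNormalIn.apply_mem_spanS (hN : IsNormalIn N Γ) {g : Iso n} (hg : g ∈ Γ) {v : E n}
    (hv : v ∈ spanS (N : Set (Iso n))) : g.A v ∈ spanS (N : Set (Iso n)) := by
  have hle : spanS (N : Set (Iso n)) ≤ (spanS (N : Set (Iso n))).comap g.A.toLinearEquiv :=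
    Submodule.span_le.2 fun t ht => Submodule.subset_span (by
      change trans (g.A t) ∈ N
      rw [← mul_trans_mul_inv]
      exact hN.2 g hg _ ht)
  exact hle hv

lemma IsNormalIn.apply_mem_spanS_iff (hN : IsNormalIn N Γ) {g : Iso n} (hg : g ∈ Γ) (v : E n) :
    g.A v ∈ spanS (N : Set (Iso n)) ↔ v ∈ spanS (N : Set (Iso n)) := by
  refine ⟨fun h => ?_, hN.apply_mem_spanS hg⟩
  simpa using hN.apply_mem_spanS (inv_mem hg) h

/-- Commutators of `x ∈ N` with the translations of `Γ` show that `x.A - 1` maps the span of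
those translations, which is everything, into `spanS N`. -/
lemma IsNormalIn.A_fixes_orthogonal (hΓ : IsCrystallographic Γ) (hN : IsNormalIn N Γ)
    {x : Iso n} (hx : x ∈ N) : ∀ y ∈ (spanS (N : Set (Iso n)))ᗮ, x.A y = y := by
  set W := spanS (N : Set (Iso n))
  have hle : spanS (Γ : Set (Iso n)) ≤ W.comap (x.defect : E n →ₗ[ℝ] E n) :=
    Submodule.span_le.2 fun t ht => Submodule.subset_span (by
      change trans (x.A t - t) ∈ N
      rw [← commutator_trans, show x * trans t * x⁻¹ * (trans t)⁻¹ =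
        x * (trans t * x⁻¹ * (trans t)⁻¹) by group]
      exact mul_mem hx (hN.2 _ ht _ (inv_mem hx)))
  intro y hy
  have h1 : x.A y - y ∈ W := hle (hΓ.spanS_eq_top ▸ Submodule.mem_top)
  have h2 : x.A y - y ∈ Wᗮ :=
    sub_mem (x.A.apply_mem_orthogonal (hN.apply_mem_spanS_iff (hN.1 hx)) hy) hy
  have h3 : x.A y - y ∈ W ⊓ Wᗮ := ⟨h1, h2⟩
  rwa [W.inf_orthogonal_eq_bot, Submodule.mem_bot, sub_eq_zero] at h3

/-- Some power `x ^ k` is a translation, by a vector of `spanS N`, and its projection to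
`(spanS N)ᗮ` is `k` times that of `x.a`. -/
lemma IsNormalIn.a_mem_spanS (hΓ : IsCrystallographic Γ) (hN : IsNormalIn N Γ) {x : Iso n}
    (hx : x ∈ N) : x.a ∈ spanS (N : Set (Iso n)) := by
  obtain ⟨k, hk, hxk⟩ := hΓ.exists_pow_A_eq_one (hN.1 hx)
  have hxkN : (x ^ k).a ∈ spanS (N : Set (Iso n)) :=
    Submodule.subset_span (show trans (x ^ k).a ∈ N by
      rw [trans_a_eq_self hxk]; exact pow_mem hx k)
  rw [← (spanS (N : Set (Iso n))).orthogonal_orthogonal, Submodule.mem_orthogonal']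
  intro y hy
  have h := inner_pow_a (hN.A_fixes_orthogonal hΓ hx y hy) k
  rw [hy _ hxkN] at h
  exact (mul_eq_zero.1 h.symm).resolve_left (Nat.cast_ne_zero.2 hk.ne')

theorem IsNormalIn.subset_completion (hΓ : IsCrystallographic Γ) (hN : IsNormalIn N Γ) :
    (N : Set (Iso n)) ⊆ completion Γ N := fun _ hx =>
  ⟨hN.1 hx, hN.a_mem_spanS hΓ hx, hN.A_fixes_orthogonal hΓ hx⟩

lemma IsNormalIn.subgroupOf_normal (hN : IsNormalIn N Γ) :
    (N.subgroupOf Γ).Normal :=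
  ⟨fun x hx g => hN.2 g g.2 x hx⟩

lemma isNormalIn_map_subtype (H : Subgroup Γ) [H.Normal] : IsNormalIn (H.map Γ.subtype) Γ := by
  refine ⟨fun _ ⟨g, _, hg⟩ => hg ▸ g.2, ?_⟩
  rintro g hg _ ⟨x, hx, rfl⟩
  exact ⟨_, Subgroup.Normal.conj_mem ‹_› x hx ⟨g, hg⟩, by simp⟩

lemma spanS_map_le_of_relIndex_ne_zero {H M : Subgroup Γ} [H.Normal] (hHM : H.relIndex M ≠ 0) :
    spanS (M.map Γ.subtype : Set (Iso n)) ≤ spanS (H.map Γ.subtype : Set (Iso n)) := by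
  refine Submodule.span_le.2 fun t ⟨g, hg, hgt⟩ => ?_
  have hk : H.relIndex M • t ∈ transVecs (H.map Γ.subtype : Set (Iso n)) := by
    change trans _ ∈ H.map Γ.subtype
    rw [trans_nsmul]
    exact ⟨g ^ H.relIndex M, H.pow_relIndex_mem hg, by rw [map_pow, hgt]⟩
  have := Submodule.subset_span (R := ℝ) hk
  rw [SetLike.mem_coe, ← Nat.cast_smul_eq_nsmul ℝ] at this
  exact (Submodule.smul_mem_iff _ (Nat.cast_ne_zero.2 hHM)).1 this

/-- Every element of `N̄` has bounded translation part modulo a translation of `N`, and only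
finitely many elements of `Γ` have bounded translation part. -/
lemma IsNormalIn.relIndex_actingAlong_ne_zero (hΓ : IsCrystallographic Γ) (hN : IsNormalIn N Γ) :
    (N.subgroupOf Γ).relIndex ((actingAlong (spanS (N : Set (Iso n)))).subgroupOf Γ) ≠ 0 := by
  have := hN.subgroupOf_normal
  rw [← QuotientGroup.ker_mk' (N.subgroupOf Γ), Subgroup.relIndex_ker]
  obtain ⟨R, hR⟩ := (translationLattice N).exists_norm_sub_le_of_mem_span
  have hF : {g : Γ | ‖(g : Iso n).a‖ ≤ R}.Finite :=
    (hΓ.finite_norm_a_le R).preimage Subtype.val_injective.injOn |>.subset fun g hg => ⟨g.2, hg⟩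
  have : Finite (((actingAlong (spanS (N : Set (Iso n)))).subgroupOf Γ).map
      (QuotientGroup.mk' (N.subgroupOf Γ))) := by
    refine Set.Finite.to_subtype ((hF.image (QuotientGroup.mk' _)).subset ?_)
    rintro _ ⟨x, hx, rfl⟩
    obtain ⟨t, ht, htR⟩ := hR _ hx.1
    have htN : trans (-t) ∈ N := by rw [trans_neg]; exact inv_mem ht
    refine ⟨⟨trans (-t), hN.1 htN⟩ * x, ?_, ?_⟩
    · simpa [add_comm, ← sub_eq_add_neg] using htR
    · have htN' : (⟨trans (-t), hN.1 htN⟩ : Γ) ∈ N.subgroupOf Γ := htN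
      rw [map_mul, QuotientGroup.mk'_apply, (QuotientGroup.eq_one_iff _).2 htN', one_mul]
  exact Nat.card_pos.ne'

theorem IsCrystallographic.preimage_completion (hΓ : IsCrystallographic Γ) (H : Subgroup Γ)
    [H.Normal] :
    Subtype.val ⁻¹' completion Γ (H.map Γ.subtype : Set (Iso n)) = H.commensurableNormalHull := by
  set N := H.map Γ.subtype
  have hN : IsNormalIn N Γ := isNormalIn_map_subtype H
  have hNH : N.subgroupOf Γ = H := Subgroup.comap_map_eq_self_of_injective Γ.subtype_injective H
  ext x
  constructor
  · intro hx
    refine ⟨(actingAlong (spanS (N : Set (Iso n)))).subgroupOf Γ,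
      ⟨fun y hy g => conj_mem_actingAlong (hN.apply_mem_spanS_iff g.2) hy⟩,
      fun y hy => (hN.subset_completion hΓ ⟨y, hy, rfl⟩).2, ?_, hx.2⟩
    simpa [hNH] using hN.relIndex_actingAlong_ne_zero hΓ
  · rintro ⟨M, hM, hHM, hidx, hx⟩
    have hspan : spanS (M.map Γ.subtype : Set (Iso n)) = spanS (N : Set (Iso n)) :=
      le_antisymm (spanS_map_le_of_relIndex_ne_zero hidx)
        (Submodule.span_mono fun t ht => Subgroup.map_mono hHM ht)
    have := (isNormalIn_map_subtype M).subset_completion hΓ ⟨x, hx, rfl⟩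
    rwa [completion_eq, hspan] at this

end Iso

/-- If `ψ : Γ → Γ'` is an isomorphism of crystallographic groups and
`N` is a normal subgroup of `Γ`, then the completion of `ψ(N)` in `Γ'` equals `ψ(N̄)`. -/
theorem stmt5 {n : ℕ} (Γ Γ' N : Subgroup (Iso n)) (hΓ : Iso.IsCrystallographic Γ)
    (hΓ' : Iso.IsCrystallographic Γ') (hN : Iso.IsNormalIn N Γ) (ψ : ↥Γ ≃* ↥Γ') :
    Iso.completion Γ' (Subtype.val '' (⇑ψ '' {x : ↥Γ | (x : Iso n) ∈ N})) =
      Subtype.val '' (⇑ψ '' {x : ↥Γ | (x : Iso n) ∈ Iso.completion Γ (N : Set (Iso n))}) := by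
  have hN₀ := hN.subgroupOf_normal
  have : ((N.subgroupOf Γ).map ψ.toMonoidHom).Normal := hN₀.map _ ψ.surjective
  have hψN : Subtype.val '' (⇑ψ '' {x : ↥Γ | (x : Iso n) ∈ N}) =
      (((N.subgroupOf Γ).map ψ.toMonoidHom).map Γ'.subtype : Set (Iso n)) := by
    simp only [Subgroup.coe_map]
    rfl
  have hN' : {x : ↥Γ | (x : Iso n) ∈ Iso.completion Γ (N : Set (Iso n))} =
      (N.subgroupOf Γ).commensurableNormalHull := by
    rw [← hΓ.preimage_completion, Subgroup.subgroupOf_map_subtype, inf_of_le_left hN.1]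
    rfl
  rw [hψN, hN', Subgroup.image_commensurableNormalHull, ← hΓ'.preimage_completion,
    Set.image_preimage_eq_of_subset fun g hg => ⟨⟨g, hg.1⟩, rfl⟩]
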